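/- The restricted eigenvalue assumption implies the comparison condition used in the oracle inequality: Suppose Assumption 𝒜(𝒥_e, 𝒥_G, ϑ, κ) holds with κ > 0 and ϑ ≥ 0, and let J_e = |𝒥_e|, J_G = |𝒥_G|. Then for every Δ = [Δ_b, Δ_Φᵀ]ᵀ ∈ ℝ^{(p+1)×p} with Δ_Φ = Δ_Φᵀ, one has ‖X̆‖₂(‖(Δ_Φ)_{𝒥_e}‖₁ + ‖(Δ_{𝒥_G})ᵀ‖_{2,1}) ≤ ‖X̆‖₂(‖(Δ_Φ)_{𝒥_e^c}‖₁ + ‖(Δ_{𝒥_G^c})ᵀ‖_{2,1}) + κ^{−1/2} √(J_e + J_G) ‖X Δ_b + X̄ vec(Δ_Φ)‖₂. -/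

import Mathlib

open Matrix MeasureTheory ProbabilityTheory
open scoped Classical

noncomputable section

/-- Spectral norm (ℓ₂ operator norm) of a real matrix:
the supremum of `‖A v‖₂` over vectors `v` with `‖v‖₂ ≤ 1`. -/
def specNorm {ι κ : Type*} [Fintype ι] [Fintype κ] (A : Matrix ι κ ℝ) : ℝ :=
  sSup {c : ℝ | ∃ v : κ → ℝ, (∑ i, v i ^ 2) ≤ 1 ∧
    c = Real.sqrt (∑ i, A.mulVec v i ^ 2)}

/-- The augmented design `X̆ ∈ ℝ^{n×(p²+p)}`: for each `j`, its columns are `x_j`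
followed by `x_j ⊙ x_1, …, x_j ⊙ x_p` (column indices are pairs `(j,k)` with
`k = 0` for `x_j` and `k ≥ 1` for `x_j ⊙ x_k`). -/
def Xbreve {n p : ℕ} (X : Matrix (Fin n) (Fin p) ℝ) :
    Matrix (Fin n) (Fin p × Fin (p + 1)) ℝ :=
  fun i jk => Fin.cases (X i jk.1) (fun k => X i jk.1 * X i k) jk.2

/-- `X b + X̄ vec(Φ)`, where `X̄` has columns `x_j ⊙ x_k`. -/
def Mmap {n p : ℕ} (X : Matrix (Fin n) (Fin p) ℝ) (b : Fin p → ℝ)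
    (Φ : Matrix (Fin p) (Fin p) ℝ) : Fin n → ℝ :=
  fun i => X.mulVec b i + ∑ jk : Fin p × Fin p, Φ jk.1 jk.2 * (X i jk.1 * X i jk.2)

/-- `J_e(Φ)`: number of nonzero entries of `Φ`. -/
def JeCount {p : ℕ} (Φ : Matrix (Fin p) (Fin p) ℝ) : ℕ :=
  (Finset.univ.filter fun jk : Fin p × Fin p => Φ jk.1 jk.2 ≠ 0).card

/-- `J_G(b, Φ)`: number of indices `j` with `b_j² + ‖φ_j‖₂² ≠ 0`
(`φ_j` the `j`-th column of `Φ`). -/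
def JGCount {p : ℕ} (b : Fin p → ℝ) (Φ : Matrix (Fin p) (Fin p) ℝ) : ℕ :=
  (Finset.univ.filter fun j : Fin p => b j ≠ 0 ∨ ∃ k, Φ k j ≠ 0).card

/-- Euclidean norm of the `j`-th column `(b_j, φ_jᵀ)ᵀ` of `Ω = [b, Φᵀ]ᵀ`. -/
def grpNorm {p : ℕ} (b : Fin p → ℝ) (Φ : Matrix (Fin p) (Fin p) ℝ) (j : Fin p) : ℝ :=
  Real.sqrt (b j ^ 2 + ∑ k, Φ k j ^ 2)

/-- The Type-A GRESH criterion
`F(Ω) = (1/2)‖y − Xb − X̄vec(Φ)‖₂² + λ₁‖X̆‖₂‖Φ‖₁ + λ₂‖X̆‖₂‖Ωᵀ‖_{2,1}`. -/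
def Fgresh {n p : ℕ} (X : Matrix (Fin n) (Fin p) ℝ) (y : Fin n → ℝ)
    (lam1 lam2 : ℝ) (b : Fin p → ℝ) (Φ : Matrix (Fin p) (Fin p) ℝ) : ℝ :=
  (1 / 2) * (∑ i, (y i - Mmap X b Φ i) ^ 2)
    + lam1 * specNorm (Xbreve X) * (∑ j, ∑ k, |Φ j k|)
    + lam2 * specNorm (Xbreve X) * ∑ j, grpNorm b Φ j

/-- The law of `ε`: `n`-fold product of the Gaussian `N(0, σ²)`. -/
def gaussPi (n : ℕ) (σ : ℝ) : Measure (Fin n → ℝ) :=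
  Measure.pi fun _ : Fin n => gaussianReal 0 ⟨σ ^ 2, sq_nonneg σ⟩

/-- Assumption 𝒜(𝒥_e, 𝒥_G, ϑ, κ): for every `Δ = [Δ_b, Δ_Φᵀ]ᵀ` with symmetric `Δ_Φ`
lying in the ℓ₁/group-ℓ₁ restricted cone,
`κ‖X̆‖₂²(‖(Δ_Φ)_{𝒥_e}‖₂² + ‖Δ_{𝒥_G}‖_F²) ≤ ‖XΔ_b + X̄vec(Δ_Φ)‖₂²`. -/
def AssumpA {n p : ℕ} (X : Matrix (Fin n) (Fin p) ℝ)
    (Ee : Finset (Fin p × Fin p)) (Eg : Finset (Fin p)) (θ κ : ℝ) : Prop :=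
  ∀ (Δb : Fin p → ℝ) (ΔΦ : Matrix (Fin p) (Fin p) ℝ), ΔΦ = ΔΦᵀ →
    (∑ u ∈ Eeᶜ, |ΔΦ u.1 u.2|) + (∑ j ∈ Egᶜ, grpNorm Δb ΔΦ j)
      ≤ (1 + θ) * ((∑ u ∈ Ee, |ΔΦ u.1 u.2|) + ∑ j ∈ Eg, grpNorm Δb ΔΦ j) →
    κ * specNorm (Xbreve X) ^ 2 *
        ((∑ u ∈ Ee, ΔΦ u.1 u.2 ^ 2) + ∑ j ∈ Eg, (Δb j ^ 2 + ∑ k, ΔΦ k j ^ 2))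
      ≤ ∑ i, Mmap X Δb ΔΦ i ^ 2

/-!
A vector Δ either lies outside the restricted cone of 𝒜, and then (as ϑ ≥ 0) its ℓ₁/group-ℓ₁
mass on 𝒥_e, 𝒥_G is already dominated by its mass off them, or it lies inside, and then
Cauchy–Schwarz bounds that mass by √(J_e + J_G) times the corresponding ℓ₂ mass, which 𝒜
bounds by κ^{-1/2} ‖X̆‖₂⁻¹ ‖XΔ_b + X̄ vec(Δ_Φ)‖₂.
-/

theorem specNorm_nonneg {ι κ : Type*} [Fintype ι] [Fintype κ] (A : Matrix ι κ ℝ) :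
    0 ≤ specNorm A :=
  Real.sSup_nonneg fun _ ⟨_, _, hc⟩ => hc ▸ Real.sqrt_nonneg _

theorem grpNorm_nonneg {p : ℕ} (b : Fin p → ℝ) (Φ : Matrix (Fin p) (Fin p) ℝ) (j : Fin p) :
    0 ≤ grpNorm b Φ j :=
  Real.sqrt_nonneg _

theorem grpNorm_sq {p : ℕ} (b : Fin p → ℝ) (Φ : Matrix (Fin p) (Fin p) ℝ) (j : Fin p) :
    grpNorm b Φ j ^ 2 = b j ^ 2 + ∑ k, Φ k j ^ 2 :=
  Real.sq_sqrt (by positivity)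

theorem sq_sum_add_sum_le_card_add_card_mul {ι ι' : Type*} (s : Finset ι) (t : Finset ι')
    (f : ι → ℝ) (g : ι' → ℝ) :
    (∑ i ∈ s, f i + ∑ j ∈ t, g j) ^ 2 ≤
      ((s.card : ℝ) + t.card) * (∑ i ∈ s, f i ^ 2 + ∑ j ∈ t, g j ^ 2) := by
  simpa [Finset.sum_disjSum] using
    sq_sum_le_card_mul_sum_sq (s := s.disjSum t) (f := Sum.elim f g)

theorem mul_le_inv_sqrt_mul_sqrt_mul_sqrt {S L J Q M κ : ℝ} (hS : 0 ≤ S) (hL : 0 ≤ L)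
    (hJ : 0 ≤ J) (hκ : 0 < κ) (hLQ : L ^ 2 ≤ J * Q) (hQM : κ * S ^ 2 * Q ≤ M) :
    S * L ≤ (Real.sqrt κ)⁻¹ * Real.sqrt J * Real.sqrt M := by
  have hsq : (S * L) ^ 2 ≤ κ⁻¹ * J * M := calc
    (S * L) ^ 2 = S ^ 2 * L ^ 2 := mul_pow S L 2
    _ ≤ S ^ 2 * (J * Q) := by gcongr
    _ = κ⁻¹ * J * (κ * S ^ 2 * Q) := by field_simp
    _ ≤ κ⁻¹ * J * M := by gcongr
  calc S * L = Real.sqrt ((S * L) ^ 2) := (Real.sqrt_sq (mul_nonneg hS hL)).symm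
    _ ≤ Real.sqrt (κ⁻¹ * J * M) := Real.sqrt_le_sqrt hsq
    _ = (Real.sqrt κ)⁻¹ * Real.sqrt J * Real.sqrt M := by
      rw [Real.sqrt_mul (by positivity), Real.sqrt_mul (by positivity), Real.sqrt_inv]

theorem re_implies_comparison_general {n p : ℕ}
    (X : Matrix (Fin n) (Fin p) ℝ)
    (Ee : Finset (Fin p × Fin p)) (Eg : Finset (Fin p))
    (θ κ : ℝ) (hθ : 0 ≤ θ) (hκ : 0 < κ)
    (hA : AssumpA X Ee Eg θ κ) :
    ∀ (Δb : Fin p → ℝ) (ΔΦ : Matrix (Fin p) (Fin p) ℝ), ΔΦ = ΔΦᵀ →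
      specNorm (Xbreve X) * ((∑ u ∈ Ee, |ΔΦ u.1 u.2|) + ∑ j ∈ Eg, grpNorm Δb ΔΦ j)
        ≤ specNorm (Xbreve X) *
            ((∑ u ∈ Eeᶜ, |ΔΦ u.1 u.2|) + ∑ j ∈ Egᶜ, grpNorm Δb ΔΦ j)
          + (Real.sqrt κ)⁻¹ * Real.sqrt ((Ee.card : ℝ) + (Eg.card : ℝ)) *
              Real.sqrt (∑ i, Mmap X Δb ΔΦ i ^ 2) := by
  intro Δb ΔΦ hsym
  have hterm : 0 ≤ (Real.sqrt κ)⁻¹ * Real.sqrt ((Ee.card : ℝ) + (Eg.card : ℝ)) *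
      Real.sqrt (∑ i, Mmap X Δb ΔΦ i ^ 2) :=
    mul_nonneg (mul_nonneg (inv_nonneg.2 (Real.sqrt_nonneg _)) (Real.sqrt_nonneg _))
      (Real.sqrt_nonneg _)
  have hJ : 0 ≤ (Ee.card : ℝ) + (Eg.card : ℝ) :=
    add_nonneg (Nat.cast_nonneg _) (Nat.cast_nonneg _)
  set onSupport := (∑ u ∈ Ee, |ΔΦ u.1 u.2|) + ∑ j ∈ Eg, grpNorm Δb ΔΦ j
  set offSupport := (∑ u ∈ Eeᶜ, |ΔΦ u.1 u.2|) + ∑ j ∈ Egᶜ, grpNorm Δb ΔΦ j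
  have hS := specNorm_nonneg (Xbreve X)
  have hon : 0 ≤ onSupport := add_nonneg (Finset.sum_nonneg fun _ _ => abs_nonneg _)
    (Finset.sum_nonneg fun j _ => grpNorm_nonneg Δb ΔΦ j)
  have hoff : 0 ≤ offSupport := add_nonneg (Finset.sum_nonneg fun _ _ => abs_nonneg _)
    (Finset.sum_nonneg fun j _ => grpNorm_nonneg Δb ΔΦ j)
  by_cases hcone : offSupport ≤ (1 + θ) * onSupport
  · have hl1 := sq_sum_add_sum_le_card_add_card_mul Ee Eg (fun u => |ΔΦ u.1 u.2|)
      (grpNorm Δb ΔΦ)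
    simp only [sq_abs, grpNorm_sq] at hl1
    have hre := mul_le_inv_sqrt_mul_sqrt_mul_sqrt hS hon hJ hκ hl1
      (hA Δb ΔΦ hsym hcone)
    linarith [mul_nonneg hS hoff]
  · have hle : onSupport ≤ offSupport := by nlinarith
    linarith [mul_le_mul_of_nonneg_left hle hS]

/-- **The restricted eigenvalue assumption implies the comparison condition** used
in the oracle inequality: under 𝒜(𝒥_e, 𝒥_G, ϑ, κ) with `κ > 0`, for every `Δ`
with symmetric `Δ_Φ`,
`‖X̆‖₂(‖(Δ_Φ)_{𝒥_e}‖₁ + ‖(Δ_{𝒥_G})ᵀ‖_{2,1}) ≤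
 ‖X̆‖₂(‖(Δ_Φ)_{𝒥_e^c}‖₁ + ‖(Δ_{𝒥_G^c})ᵀ‖_{2,1})
   + κ^{−1/2}√(J_e + J_G)‖XΔ_b + X̄vec(Δ_Φ)‖₂`. -/
theorem re_implies_comparison {n p : ℕ} (hn : 1 ≤ n) (hp : 1 ≤ p)
    (X : Matrix (Fin n) (Fin p) ℝ)
    (Ee : Finset (Fin p × Fin p)) (Eg : Finset (Fin p))
    (θ κ : ℝ) (hθ : 0 ≤ θ) (hκ : 0 < κ)
    (hA : AssumpA X Ee Eg θ κ) :
    ∀ (Δb : Fin p → ℝ) (ΔΦ : Matrix (Fin p) (Fin p) ℝ), ΔΦ = ΔΦᵀ →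
      specNorm (Xbreve X) * ((∑ u ∈ Ee, |ΔΦ u.1 u.2|) + ∑ j ∈ Eg, grpNorm Δb ΔΦ j)
        ≤ specNorm (Xbreve X) *
            ((∑ u ∈ Eeᶜ, |ΔΦ u.1 u.2|) + ∑ j ∈ Egᶜ, grpNorm Δb ΔΦ j)
          + (Real.sqrt κ)⁻¹ * Real.sqrt ((Ee.card : ℝ) + (Eg.card : ℝ)) *
              Real.sqrt (∑ i, Mmap X Δb ΔΦ i ^ 2) :=
  re_implies_comparison_general X Ee Eg θ κ hθ hκ hA
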